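/- Let E ∪ F be a union graph (an adjunction graph with injective attaching maps) in which the intersection graph E ∩ F is a regular closed subgraph of both E and F. Then E and F are regular closed subgraphs of E ∪ F. -/

import Mathlib

open Set Topology

/-- A continuous map which is proper: preimages of compact sets are compact. -/
def ProperCont {X Y : Type*} [TopologicalSpace X] [TopologicalSpace Y] (f : X → Y) : Prop :=
  Continuous f ∧ ∀ K : Set Y, IsCompact K → IsCompact (f ⁻¹' K)

/-- The raw data of a (topological) graph: a source and a range map from edges to vertices. -/
structure GraphData (V E : Type*) where
  s : E → V
  r : E → V

/-- `g` is a topological graph: source and range are continuous and the range map is a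
local homeomorphism. -/
structure IsTopGraph {V E : Type*} [TopologicalSpace V] [TopologicalSpace E]
    (g : GraphData V E) : Prop where
  s_cont : Continuous g.s
  r_cont : Continuous g.r
  r_locHomeo : IsLocalHomeomorph g.r

namespace GraphData

variable {V E : Type*} [TopologicalSpace V] [TopologicalSpace E]

/-- `E⁰_fin`: vertices having a neighborhood whose preimage under the source map is compact. -/
def finSet (g : GraphData V E) : Set V := {v | ∃ U ∈ nhds v, IsCompact (g.s ⁻¹' U)}

/-- `E⁰_sink = E⁰ \ closure (s(E¹))`. -/
def sinkSet (g : GraphData V E) : Set V := (closure (Set.range g.s))ᶜ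

/-- `E⁰_reg = E⁰_fin \ closure (E⁰_sink)`. -/
def regSet (g : GraphData V E) : Set V := g.finSet \ closure g.sinkSet

/-- `E⁰_sing = E⁰ \ E⁰_reg`. -/
def singSet (g : GraphData V E) : Set V := (g.regSet)ᶜ

/-- A set of vertices is negatively invariant if every regular vertex in it emits an
edge whose range lies in it. -/
def NegInvariant (g : GraphData V E) (Y : Set V) : Prop :=
  ∀ v ∈ Y ∩ g.regSet, ∃ e, g.s e = v ∧ g.r e ∈ Y

/-- A topological graph is row-finite if `s(E¹) = E⁰_reg`. -/
def RowFinite (g : GraphData V E) : Prop := Set.range g.s = g.regSet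

/-- The restriction of a graph to a pair of subsets of vertices and edges. -/
def restrict (g : GraphData V E) (G0 : Set V) (G1 : Set E)
    (hs : Set.MapsTo g.s G1 G0) (hr : Set.MapsTo g.r G1 G0) : GraphData G0 G1 where
  s := fun e => ⟨g.s e, hs e.2⟩
  r := fun e => ⟨g.r e, hr e.2⟩

end GraphData

/-- `(G0, G1)` determines a closed subgraph of `g` (in particular it is itself
a topological graph with the restricted source and range maps). -/
structure IsClosedSubgraph {V E : Type*} [TopologicalSpace V] [TopologicalSpace E]
    (g : GraphData V E) (G0 : Set V) (G1 : Set E) : Prop where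
  s_maps : Set.MapsTo g.s G1 G0
  r_maps : Set.MapsTo g.r G1 G0
  closed0 : IsClosed G0
  closed1 : IsClosed G1
  isGraph : IsTopGraph (g.restrict G0 G1 s_maps r_maps)

/-- A regular closed subgraph: a closed subgraph whose vertex set is negatively invariant
and such that `r⁻¹(G⁰) ⊆ G¹`. -/
structure IsRegularClosedSubgraph {V E : Type*} [TopologicalSpace V] [TopologicalSpace E]
    (g : GraphData V E) (G0 : Set V) (G1 : Set E) extends IsClosedSubgraph g G0 G1 : Prop where
  negInv : g.NegInvariant G0
  r_pre : g.r ⁻¹' G0 ⊆ G1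

/-- A regular factor map `(m¹, m⁰) : gG → gF` between topological graphs: a pair of proper
continuous maps satisfying (F1), (F2) and (F3). -/
structure IsRegularFactorMap {V1 E1 V2 E2 : Type*}
    [TopologicalSpace V1] [TopologicalSpace E1] [TopologicalSpace V2] [TopologicalSpace E2]
    (gG : GraphData V1 E1) (gF : GraphData V2 E2) (m0 : V1 → V2) (m1 : E1 → E2) : Prop where
  proper0 : ProperCont m0
  proper1 : ProperCont m1
  F1r : ∀ e, gF.r (m1 e) = m0 (gG.r e)
  F1s : ∀ e, gF.s (m1 e) = m0 (gG.s e)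
  F2 : ∀ (x : E2) (v : V1), gF.r x = m0 v → ∃! e : E1, m1 e = x ∧ gG.r e = v
  F3 : m0 '' gG.singSet ⊆ gF.singSet

section Adjunction

/-- The relation generating the adjunction-space identification: `a ∈ A ⊆ Y` is glued
to `f a ∈ X`. -/
inductive AdjRel {X Y : Type*} {A : Set Y} (f : A → X) : X ⊕ Y → X ⊕ Y → Prop
  | glue (a : A) : AdjRel f (Sum.inl (f a)) (Sum.inr a.1)

/-- The adjunction space `X ∪_f Y`. -/
def AdjSpace {X Y : Type*} {A : Set Y} (f : A → X) : Type _ := Quot (AdjRel f)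

instance {X Y : Type*} [TopologicalSpace X] [TopologicalSpace Y] {A : Set Y} (f : A → X) :
    TopologicalSpace (AdjSpace f) :=
  inferInstanceAs (TopologicalSpace (Quot (AdjRel f)))

/-- The canonical (closed) embedding `X → X ∪_f Y`. -/
def adjInc {X Y : Type*} {A : Set Y} (f : A → X) : X → AdjSpace f :=
  fun x => Quot.mk _ (Sum.inl x)

/-- The canonical map `p : Y → X ∪_f Y`. -/
def adjP {X Y : Type*} {A : Set Y} (f : A → X) : Y → AdjSpace f :=
  fun y => Quot.mk _ (Sum.inr y)

variable {VE EE VF EF : Type*}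

/-- The source map `s_∪` of the adjunction graph `E ∪_m F`. -/
def adjS (gE : GraphData VE EE) (gF : GraphData VF EF) {G0 : Set VF} {G1 : Set EF}
    (m0 : G0 → VE) (m1 : G1 → EE) (hs : Set.MapsTo gF.s G1 G0)
    (hF1s : ∀ e : G1, gE.s (m1 e) = m0 ⟨gF.s e, hs e.2⟩) :
    AdjSpace m1 → AdjSpace m0 :=
  Quot.lift
    (fun x => match x with
      | Sum.inl e => adjInc m0 (gE.s e)
      | Sum.inr e => adjP m0 (gF.s e))
    (by
      rintro _ _ ⟨a⟩
      show adjInc m0 (gE.s (m1 a)) = adjP m0 (gF.s a.1)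
      rw [hF1s a]
      exact Quot.sound (AdjRel.glue ⟨gF.s a.1, hs a.2⟩))

/-- The range map `r_∪` of the adjunction graph `E ∪_m F`. -/
def adjR (gE : GraphData VE EE) (gF : GraphData VF EF) {G0 : Set VF} {G1 : Set EF}
    (m0 : G0 → VE) (m1 : G1 → EE) (hr : Set.MapsTo gF.r G1 G0)
    (hF1r : ∀ e : G1, gE.r (m1 e) = m0 ⟨gF.r e, hr e.2⟩) :
    AdjSpace m1 → AdjSpace m0 :=
  Quot.lift
    (fun x => match x with
      | Sum.inl e => adjInc m0 (gE.r e)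
      | Sum.inr e => adjP m0 (gF.r e))
    (by
      rintro _ _ ⟨a⟩
      show adjInc m0 (gE.r (m1 a)) = adjP m0 (gF.r a.1)
      rw [hF1r a]
      exact Quot.sound (AdjRel.glue ⟨gF.r a.1, hr a.2⟩))

/-- The adjunction graph `E ∪_m F`, obtained by attaching the topological graph `F` to the
topological graph `E` along a closed subgraph `(G0, G1)` of `F` via the pair `(m¹, m⁰)`. -/
def adjGraph (gE : GraphData VE EE) (gF : GraphData VF EF) {G0 : Set VF} {G1 : Set EF}
    (m0 : G0 → VE) (m1 : G1 → EE)
    (hs : Set.MapsTo gF.s G1 G0) (hr : Set.MapsTo gF.r G1 G0)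
    (hF1s : ∀ e : G1, gE.s (m1 e) = m0 ⟨gF.s e, hs e.2⟩)
    (hF1r : ∀ e : G1, gE.r (m1 e) = m0 ⟨gF.r e, hr e.2⟩) :
    GraphData (AdjSpace m0) (AdjSpace m1) where
  s := adjS gE gF m0 m1 hs hF1s
  r := adjR gE gF m0 m1 hr hF1r

end Adjunction

/-!
Suppose the edges of a graph `g` are covered by two closed subgraphs, the images of `g₁` and
`g₂`. Then the image of `g₁` is regular in `g` as soon as its trace on `g₂` is regular in `g₂`.
An edge of `g` ending in the image of `g₁` comes from `g₁`, or from `g₂` and then from the trace,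
which is closed under `r⁻¹`. For negative invariance, take a regular vertex `v` coming from `g₁`.
If it is a limit of sources of `g₁`, it is a source of `g₁`, since a compact source-neighbourhood
makes the nearby sources a closed set. Otherwise every source of `g` near `v` comes from `g₂`, so
`v` is a regular vertex of `g₂` lying in the trace, and negative invariance of the trace in `g₂`
supplies the edge. The union `E ∪ F` is covered by `E` and `F`, both with trace `E ∩ F`.
-/

namespace AdjSpace

variable {X Y : Type*} {A : Set Y} {f : A → X}

noncomputable def rep (f : A → X) : AdjSpace f → X ⊕ Y :=
  haveI := Classical.decPred (· ∈ A)
  Quot.lift (Sum.elim Sum.inl fun y => if h : y ∈ A then Sum.inl (f ⟨y, h⟩) else Sum.inr y)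
    (by rintro _ _ ⟨a⟩; simp [a.2])

lemma rep_adjInc (x : X) : rep f (adjInc f x) = Sum.inl x := rfl

lemma rep_adjP_of_mem {y : Y} (h : y ∈ A) : rep f (adjP f y) = Sum.inl (f ⟨y, h⟩) :=
  dif_pos h

lemma rep_adjP_of_notMem {y : Y} (h : y ∉ A) : rep f (adjP f y) = Sum.inr y :=
  dif_neg h

lemma adjInc_injective : Function.Injective (adjInc f) :=
  fun _ _ h => Sum.inl_injective (congrArg (rep f) h)

lemma adjInc_eq_adjP_iff {x : X} {y : Y} :
    adjInc f x = adjP f y ↔ ∃ h : y ∈ A, f ⟨y, h⟩ = x := by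
  refine ⟨fun hxy => ?_, fun ⟨h, hfx⟩ => hfx ▸ Quot.sound (AdjRel.glue ⟨y, h⟩)⟩
  have hrep := congrArg (rep f) hxy
  by_cases h : y ∈ A
  · rw [rep_adjInc, rep_adjP_of_mem h] at hrep
    exact ⟨h, (Sum.inl_injective hrep).symm⟩
  · rw [rep_adjInc, rep_adjP_of_notMem h] at hrep
    exact (Sum.inl_ne_inr hrep).elim

lemma adjP_injective (hf : Function.Injective f) : Function.Injective (adjP f) := by
  intro y y' hyy'
  by_cases h : y ∈ A
  · obtain ⟨h', hf'⟩ := adjInc_eq_adjP_iff.1 ((adjInc_eq_adjP_iff.2 ⟨h, rfl⟩).trans hyy')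
    exact congrArg Subtype.val (hf hf').symm
  · have h' : y' ∉ A := fun h' =>
      h (adjInc_eq_adjP_iff.1 ((adjInc_eq_adjP_iff.2 ⟨h', rfl⟩).trans hyy'.symm)).1
    have hrep := congrArg (rep f) hyy'
    rwa [rep_adjP_of_notMem h, rep_adjP_of_notMem h', Sum.inr.injEq] at hrep

lemma range_adjInc_union_range_adjP : range (adjInc f) ∪ range (adjP f) = univ := by
  refine eq_univ_of_forall fun p => ?_
  obtain ⟨x | y, rfl⟩ := Quot.exists_rep p
  exacts [Or.inl ⟨x, rfl⟩, Or.inr ⟨y, rfl⟩]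

lemma adjP_preimage_image_adjInc (C : Set X) :
    adjP f ⁻¹' (adjInc f '' C) = Subtype.val '' (f ⁻¹' C) := by
  ext y
  simp only [mem_preimage, mem_image, adjInc_eq_adjP_iff]
  constructor
  · rintro ⟨x, hx, h, rfl⟩
    exact ⟨⟨y, h⟩, hx, rfl⟩
  · rintro ⟨a, ha, rfl⟩
    exact ⟨f a, ha, a.2, rfl⟩

lemma adjInc_preimage_image_adjP (D : Set Y) :
    adjInc f ⁻¹' (adjP f '' D) = f '' (Subtype.val ⁻¹' D) := by
  ext x
  simp only [mem_preimage, mem_image, eq_comm (a := adjP f _), adjInc_eq_adjP_iff]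
  constructor
  · rintro ⟨y, hy, h, rfl⟩
    exact ⟨⟨y, h⟩, hy, rfl⟩
  · rintro ⟨a, ha, rfl⟩
    exact ⟨a, ha, a.2, rfl⟩

lemma adjP_preimage_range_adjInc : adjP f ⁻¹' range (adjInc f) = A := by
  rw [← image_univ, adjP_preimage_image_adjInc, preimage_univ, image_univ, Subtype.range_val]

lemma adjInc_preimage_range_adjP : adjInc f ⁻¹' range (adjP f) = range f := by
  rw [← image_univ, adjInc_preimage_image_adjP, preimage_univ, image_univ]

variable [TopologicalSpace X] [TopologicalSpace Y]

lemma isClosed_iff_preimage {S : Set (AdjSpace f)} :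
    IsClosed S ↔ IsClosed (adjInc f ⁻¹' S) ∧ IsClosed (adjP f ⁻¹' S) :=
  isQuotientMap_quot_mk.isClosed_preimage.symm.trans isClosed_sum_iff

lemma isClosedEmbedding_adjInc (hA : IsClosed A) (hf : Continuous f) :
    IsClosedEmbedding (adjInc f) := by
  refine .of_continuous_injective_isClosedMap (continuous_quot_mk.comp continuous_inl)
    adjInc_injective fun C hC => isClosed_iff_preimage.2 ⟨?_, ?_⟩
  · rwa [adjInc_injective.preimage_image]
  · rw [adjP_preimage_image_adjInc]
    exact hA.isClosedEmbedding_subtypeVal.isClosedMap _ (hC.preimage hf)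

lemma isClosedEmbedding_adjP (hf : IsClosedMap f) (hinj : Function.Injective f) :
    IsClosedEmbedding (adjP f) := by
  refine .of_continuous_injective_isClosedMap (continuous_quot_mk.comp continuous_inr)
    (adjP_injective hinj) fun D hD => isClosed_iff_preimage.2 ⟨?_, ?_⟩
  · rw [adjInc_preimage_image_adjP]
    exact hf _ (hD.preimage continuous_subtype_val)
  · rwa [(adjP_injective hinj).preimage_image]

end AdjSpace

namespace GraphData

variable {V E : Type*} [TopologicalSpace V] [TopologicalSpace E] {g : GraphData V E}

lemma regSet_eq_finSet_inter_interior : g.regSet = g.finSet ∩ interior (closure (range g.s)) := by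
  rw [regSet, sinkSet, closure_compl, sdiff_compl]

lemma mem_range_s_of_mem_finSet [T2Space V] (hs : Continuous g.s) {v : V}
    (hfin : v ∈ g.finSet) (hcl : v ∈ closure (range g.s)) : v ∈ range g.s := by
  obtain ⟨U, hU, hK⟩ := hfin
  have hclosed : IsClosed (g.s '' (g.s ⁻¹' U)) := (hK.image hs).isClosed
  by_contra hv
  have hnhds : U ∩ (g.s '' (g.s ⁻¹' U))ᶜ ∈ 𝓝 v :=
    Filter.inter_mem hU (hclosed.isOpen_compl.mem_nhds fun ⟨e, _, he⟩ => hv ⟨e, he⟩)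
  obtain ⟨_, ⟨hU', hnot⟩, e, rfl⟩ := mem_closure_iff_nhds.1 hcl _ hnhds
  exact hnot ⟨e, hU', rfl⟩

end GraphData

structure IsClosedGraphEmbedding {V E V' E' : Type*} [TopologicalSpace V] [TopologicalSpace E]
    [TopologicalSpace V'] [TopologicalSpace E'] (g' : GraphData V' E') (g : GraphData V E)
    (φ0 : V' → V) (φ1 : E' → E) : Prop where
  isClosedEmbedding0 : IsClosedEmbedding φ0
  isClosedEmbedding1 : IsClosedEmbedding φ1
  s_apply : ∀ e, g.s (φ1 e) = φ0 (g'.s e)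
  r_apply : ∀ e, g.r (φ1 e) = φ0 (g'.r e)

namespace IsClosedGraphEmbedding

variable {V E V' E' : Type*} [TopologicalSpace V] [TopologicalSpace E]
  [TopologicalSpace V'] [TopologicalSpace E'] {g : GraphData V E} {g' : GraphData V' E'}
  {φ0 : V' → V} {φ1 : E' → E}

lemma mapsTo_s (hφ : IsClosedGraphEmbedding g' g φ0 φ1) :
    MapsTo g.s (range φ1) (range φ0) := by
  rintro _ ⟨e, rfl⟩
  exact ⟨g'.s e, (hφ.s_apply e).symm⟩

lemma mapsTo_r (hφ : IsClosedGraphEmbedding g' g φ0 φ1) :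
    MapsTo g.r (range φ1) (range φ0) := by
  rintro _ ⟨e, rfl⟩
  exact ⟨g'.r e, (hφ.r_apply e).symm⟩

lemma s_comp (hφ : IsClosedGraphEmbedding g' g φ0 φ1) : g.s ∘ φ1 = φ0 ∘ g'.s :=
  funext hφ.s_apply

lemma image_range_s (hφ : IsClosedGraphEmbedding g' g φ0 φ1) :
    g.s '' range φ1 = φ0 '' range g'.s := by
  rw [← range_comp, ← range_comp, hφ.s_comp]

lemma mem_finSet (hφ : IsClosedGraphEmbedding g' g φ0 φ1) {w : V'} (hw : φ0 w ∈ g.finSet) :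
    w ∈ g'.finSet := by
  obtain ⟨U, hU, hK⟩ := hw
  refine ⟨φ0 ⁻¹' U, hφ.isClosedEmbedding0.continuous.continuousAt.preimage_mem_nhds hU, ?_⟩
  rw [← preimage_comp, ← hφ.s_comp, preimage_comp]
  exact hφ.isClosedEmbedding1.isProperMap.isCompact_preimage hK

lemma isTopGraph_restrict (hφ : IsClosedGraphEmbedding g' g φ0 φ1) (hg' : IsTopGraph g') :
    IsTopGraph (g.restrict (range φ0) (range φ1) hφ.mapsTo_s hφ.mapsTo_r) := by
  let e0 : V' ≃ₜ range φ0 := hφ.isClosedEmbedding0.toHomeomorph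
  let e1 : E' ≃ₜ range φ1 := hφ.isClosedEmbedding1.toHomeomorph
  have transport : ∀ {a : E → V} {a' : E' → V'} (ha : ∀ e, a (φ1 e) = φ0 (a' e))
      (hmaps : MapsTo a (range φ1) (range φ0)), hmaps.restrict = e0 ∘ a' ∘ e1.symm := by
    intro a a' ha hmaps
    funext x
    obtain ⟨e, rfl⟩ := e1.surjective x
    exact Subtype.ext (by simp [MapsTo.val_restrict_apply, e0, e1, ha])
  have hs : (g.restrict _ _ hφ.mapsTo_s hφ.mapsTo_r).s = e0 ∘ g'.s ∘ e1.symm :=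
    transport hφ.s_apply hφ.mapsTo_s
  have hr : (g.restrict _ _ hφ.mapsTo_s hφ.mapsTo_r).r = e0 ∘ g'.r ∘ e1.symm :=
    transport hφ.r_apply hφ.mapsTo_r
  refine ⟨?_, ?_, ?_⟩
  · rw [hs]; exact e0.continuous.comp (hg'.s_cont.comp e1.symm.continuous)
  · rw [hr]; exact e0.continuous.comp (hg'.r_cont.comp e1.symm.continuous)
  · rw [hr]; exact (e0.isLocalHomeomorph.comp hg'.r_locHomeo).comp e1.symm.isLocalHomeomorph

lemma isClosedSubgraph (hφ : IsClosedGraphEmbedding g' g φ0 φ1) (hg' : IsTopGraph g') :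
    IsClosedSubgraph g (range φ0) (range φ1) :=
  ⟨hφ.mapsTo_s, hφ.mapsTo_r, hφ.isClosedEmbedding0.isClosed_range,
    hφ.isClosedEmbedding1.isClosed_range, hφ.isTopGraph_restrict hg'⟩

end IsClosedGraphEmbedding

section Cover

variable {V E V₁ E₁ V₂ E₂ : Type*} {g : GraphData V E} {g₁ : GraphData V₁ E₁}
  {g₂ : GraphData V₂ E₂} {φ0 : V₁ → V} {φ1 : E₁ → E} {ψ0 : V₂ → V} {ψ1 : E₂ → E}

lemma preimage_r_range_subset_of_cover (hψr : ∀ e, g.r (ψ1 e) = ψ0 (g₂.r e))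
    (hcover : range φ1 ∪ range ψ1 = univ)
    (hr : g₂.r ⁻¹' (ψ0 ⁻¹' range φ0) ⊆ ψ1 ⁻¹' range φ1) :
    g.r ⁻¹' range φ0 ⊆ range φ1 := by
  intro e he
  obtain h | ⟨e', rfl⟩ := hcover.symm ▸ mem_univ e
  · exact h
  · exact hr (show ψ0 (g₂.r e') ∈ range φ0 from hψr e' ▸ he)

variable [TopologicalSpace V] [TopologicalSpace E] [TopologicalSpace V₁] [TopologicalSpace E₁]
  [TopologicalSpace V₂] [TopologicalSpace E₂]

lemma closure_range_s_eq_of_cover (hφ : IsClosedGraphEmbedding g₁ g φ0 φ1)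
    (hψ : IsClosedGraphEmbedding g₂ g ψ0 ψ1) (hcover : range φ1 ∪ range ψ1 = univ) :
    closure (range g.s) = φ0 '' closure (range g₁.s) ∪ ψ0 '' closure (range g₂.s) := by
  rw [← image_univ, ← hcover, image_union, hφ.image_range_s, hψ.image_range_s, closure_union,
    hφ.isClosedEmbedding0.closure_image_eq, hψ.isClosedEmbedding0.closure_image_eq]

lemma mem_interior_closure_range_s_of_cover (hφ : IsClosedGraphEmbedding g₁ g φ0 φ1)
    (hψ : IsClosedGraphEmbedding g₂ g ψ0 ψ1) (hcover : range φ1 ∪ range ψ1 = univ) {y : V₂}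
    (hint : ψ0 y ∈ interior (closure (range g.s)))
    (hy : ψ0 y ∉ φ0 '' closure (range g₁.s)) :
    y ∈ interior (closure (range g₂.s)) := by
  have hcont := hψ.isClosedEmbedding0.continuous
  have hclosed := hφ.isClosedEmbedding0.isClosedMap _ (isClosed_closure (s := range g₁.s))
  refine mem_interior.2
    ⟨ψ0 ⁻¹' interior (closure (range g.s)) ∩ (ψ0 ⁻¹' (φ0 '' closure (range g₁.s)))ᶜ,
      fun y' ⟨hint', hy'⟩ => ?_,
      (isOpen_interior.preimage hcont).inter (hclosed.preimage hcont).isOpen_compl, hint, hy⟩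
  have hmem := interior_subset hint'
  rw [closure_range_s_eq_of_cover hφ hψ hcover] at hmem
  exact hψ.isClosedEmbedding0.injective.mem_set_image.1 (hmem.resolve_left hy')

lemma negInvariant_range_of_cover [T2Space V₁] (hs₁ : Continuous g₁.s)
    (hφ : IsClosedGraphEmbedding g₁ g φ0 φ1) (hψ : IsClosedGraphEmbedding g₂ g ψ0 ψ1)
    (hcover : range φ1 ∪ range ψ1 = univ) (hneg : g₂.NegInvariant (ψ0 ⁻¹' range φ0)) :
    g.NegInvariant (range φ0) := by
  rintro _ ⟨⟨w, rfl⟩, hreg⟩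
  rw [GraphData.regSet_eq_finSet_inter_interior] at hreg
  obtain ⟨hfin, hint⟩ := hreg
  by_cases hw : w ∈ closure (range g₁.s)
  · obtain ⟨e, rfl⟩ := GraphData.mem_range_s_of_mem_finSet hs₁ (hφ.mem_finSet hfin) hw
    exact ⟨φ1 e, hφ.s_apply e, hφ.r_apply e ▸ mem_range_self _⟩
  have hw' : φ0 w ∉ φ0 '' closure (range g₁.s) :=
    hφ.isClosedEmbedding0.injective.mem_set_image.not.2 hw
  have hmem := interior_subset hint
  rw [closure_range_s_eq_of_cover hφ hψ hcover] at hmem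
  obtain ⟨y, -, hy⟩ := hmem.resolve_left hw'
  rw [← hy] at hfin hint hw'
  have hyreg : y ∈ g₂.regSet := by
    rw [GraphData.regSet_eq_finSet_inter_interior]
    exact ⟨hψ.mem_finSet hfin, mem_interior_closure_range_s_of_cover hφ hψ hcover hint hw'⟩
  obtain ⟨e, hse, hre⟩ := hneg y ⟨⟨w, hy.symm⟩, hyreg⟩
  exact ⟨ψ1 e, by rw [hψ.s_apply, hse, hy], hψ.r_apply e ▸ hre⟩

lemma isRegularClosedSubgraph_range_of_cover [T2Space V₁] (hg₁ : IsTopGraph g₁)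
    (hφ : IsClosedGraphEmbedding g₁ g φ0 φ1) (hψ : IsClosedGraphEmbedding g₂ g ψ0 ψ1)
    (hcover : range φ1 ∪ range ψ1 = univ) (hneg : g₂.NegInvariant (ψ0 ⁻¹' range φ0))
    (hr : g₂.r ⁻¹' (ψ0 ⁻¹' range φ0) ⊆ ψ1 ⁻¹' range φ1) :
    IsRegularClosedSubgraph g (range φ0) (range φ1) :=
  { hφ.isClosedSubgraph hg₁ with
    negInv := negInvariant_range_of_cover hg₁.s_cont hφ hψ hcover hneg
    r_pre := preimage_r_range_subset_of_cover hψ.r_apply hcover hr }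

end Cover

theorem unionGraph_regularClosedSubgraphs_general
    {VE EE VF EF : Type*} [TopologicalSpace VE] [TopologicalSpace EE]
    [TopologicalSpace VF] [TopologicalSpace EF]
    [LocallyCompactSpace VE] [T2Space VE] [LocallyCompactSpace EE] [T2Space EE]
    [T2Space VF]
    (gE : GraphData VE EE) (gF : GraphData VF EF)
    (hE : IsTopGraph gE) (hF : IsTopGraph gF)
    {G0 : Set VF} {G1 : Set EF}
    (hGF : IsRegularClosedSubgraph gF G0 G1)
    (m0 : G0 → VE) (m1 : G1 → EE) (hm0 : ProperCont m0) (hm1 : ProperCont m1)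
    (hinj0 : Function.Injective m0) (hinj1 : Function.Injective m1)
    (hF1s : ∀ e : G1, gE.s (m1 e) = m0 ⟨gF.s e, hGF.s_maps e.2⟩)
    (hF1r : ∀ e : G1, gE.r (m1 e) = m0 ⟨gF.r e, hGF.r_maps e.2⟩)
    (hGE : IsRegularClosedSubgraph gE (Set.range m0) (Set.range m1)) :
    IsRegularClosedSubgraph (adjGraph gE gF m0 m1 hGF.s_maps hGF.r_maps hF1s hF1r)
        (Set.range (adjInc m0)) (Set.range (adjInc m1)) ∧
    IsRegularClosedSubgraph (adjGraph gE gF m0 m1 hGF.s_maps hGF.r_maps hF1s hF1r)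
        (Set.range (adjP m0)) (Set.range (adjP m1)) := by
  set gU := adjGraph gE gF m0 m1 hGF.s_maps hGF.r_maps hF1s hF1r
  have hclosed0 := (isProperMap_iff_isCompact_preimage.2 ⟨hm0.1, fun _ => hm0.2 _⟩).isClosedMap
  have hclosed1 := (isProperMap_iff_isCompact_preimage.2 ⟨hm1.1, fun _ => hm1.2 _⟩).isClosedMap
  have hιE : IsClosedGraphEmbedding gE gU (adjInc m0) (adjInc m1) :=
    ⟨AdjSpace.isClosedEmbedding_adjInc hGF.closed0 hm0.1,
      AdjSpace.isClosedEmbedding_adjInc hGF.closed1 hm1.1, fun _ => rfl, fun _ => rfl⟩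
  have hιF : IsClosedGraphEmbedding gF gU (adjP m0) (adjP m1) :=
    ⟨AdjSpace.isClosedEmbedding_adjP hclosed0 hinj0,
      AdjSpace.isClosedEmbedding_adjP hclosed1 hinj1, fun _ => rfl, fun _ => rfl⟩
  have hcover := AdjSpace.range_adjInc_union_range_adjP (f := m1)
  constructor
  · refine isRegularClosedSubgraph_range_of_cover hE hιE hιF hcover ?_ ?_
    · rw [AdjSpace.adjP_preimage_range_adjInc]
      exact hGF.negInv
    · rw [AdjSpace.adjP_preimage_range_adjInc, AdjSpace.adjP_preimage_range_adjInc]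
      exact hGF.r_pre
  · refine isRegularClosedSubgraph_range_of_cover hF hιF hιE (union_comm _ _ ▸ hcover) ?_ ?_
    · rw [AdjSpace.adjInc_preimage_range_adjP]
      exact hGE.negInv
    · rw [AdjSpace.adjInc_preimage_range_adjP, AdjSpace.adjInc_preimage_range_adjP]
      exact hGE.r_pre

/-- Let `E ∪ F` be a union graph (an adjunction graph with injective attaching maps) in
which the intersection graph `E ∩ F` (here `(G0, G1)` inside `F`, realized inside `E` via
the injective maps `m⁰`, `m¹`) is a regular closed subgraph of both `E` and `F`.
Then `E` and `F` are regular closed subgraphs of `E ∪ F`. -/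
theorem unionGraph_regularClosedSubgraphs
    {VE EE VF EF : Type*} [TopologicalSpace VE] [TopologicalSpace EE]
    [TopologicalSpace VF] [TopologicalSpace EF]
    [LocallyCompactSpace VE] [T2Space VE] [LocallyCompactSpace EE] [T2Space EE]
    [LocallyCompactSpace VF] [T2Space VF] [LocallyCompactSpace EF] [T2Space EF]
    (gE : GraphData VE EE) (gF : GraphData VF EF)
    (hE : IsTopGraph gE) (hF : IsTopGraph gF)
    {G0 : Set VF} {G1 : Set EF}
    (hGF : IsRegularClosedSubgraph gF G0 G1)
    (m0 : G0 → VE) (m1 : G1 → EE) (hm0 : ProperCont m0) (hm1 : ProperCont m1)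
    (hinj0 : Function.Injective m0) (hinj1 : Function.Injective m1)
    (hF1s : ∀ e : G1, gE.s (m1 e) = m0 ⟨gF.s e, hGF.s_maps e.2⟩)
    (hF1r : ∀ e : G1, gE.r (m1 e) = m0 ⟨gF.r e, hGF.r_maps e.2⟩)
    (hGE : IsRegularClosedSubgraph gE (Set.range m0) (Set.range m1)) :
    IsRegularClosedSubgraph (adjGraph gE gF m0 m1 hGF.s_maps hGF.r_maps hF1s hF1r)
        (Set.range (adjInc m0)) (Set.range (adjInc m1)) ∧
    IsRegularClosedSubgraph (adjGraph gE gF m0 m1 hGF.s_maps hGF.r_maps hF1s hF1r)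
        (Set.range (adjP m0)) (Set.range (adjP m1)) :=
  unionGraph_regularClosedSubgraphs_general gE gF hE hF hGF m0 m1 hm0 hm1 hinj0 hinj1 hF1s hF1r hGE
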